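/- The generating function \sum_{n \ge 0} r(n) x^n, where r(n) counts words of length n over \mathbb{Z}_q starting in I, ending in J, with no k consecutive letters from I nor k consecutive letters from J (and r(0) = 1), satisfies (1 - qx + (|I|^k|J| + |I||J|^k)x^{k+1} - |I|^k|J|^k x^{2k}) \sum_{n \ge 0} r(n)x^n = |I||J|x^2 - qx + 1 as formal power series. -/

import Mathlib

/-!
Cutting a word into maximal runs of letters from `I` and from `J`, an admissible word is a
sequence of pairs (an `I`-run followed by a `J`-run), every run of length between `1` and
`k - 1`; conversely every such sequence is admissible. Peeling off the first pair gives
`R = 1 + F G R` for `R = ∑ r n xⁿ`, `F = ∑_{0<i<k} (|I| x)^i` and `G = ∑_{0<j<k} (|J| x)^j`.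
Multiplying by `(1 - |I| x)(1 - |J| x)`, which turns `F` and `G` into `|I| x - (|I| x)^k` and
`|J| x - (|J| x)^k`, and using `q = |I| + |J|` gives the identity.
-/

open Finset PowerSeries

namespace List

variable {α : Type*}

theorem exists_eq_append_forall_not_head? (p : α → Prop) :
    ∀ w : List α, ∃ u m, w = u ++ m ∧ (∀ a ∈ u, p a) ∧ ∀ a ∈ m.head?, ¬ p a
  | [] => ⟨[], [], rfl, by simp, by simp⟩
  | a :: w => by
    by_cases ha : p a
    · obtain ⟨u, m, rfl, hu, hm⟩ := exists_eq_append_forall_not_head? p w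
      exact ⟨a :: u, m, rfl, by simpa [ha] using hu, hm⟩
    · exact ⟨[], a :: w, rfl, by simp, by simpa using ha⟩

theorem append_inj_of_forall_not_head? {p : α → Prop} :
    ∀ {u u' m m' : List α}, u ++ m = u' ++ m' → (∀ a ∈ u, p a) → (∀ a ∈ u', p a) →
      (∀ a ∈ m.head?, ¬ p a) → (∀ a ∈ m'.head?, ¬ p a) → u = u' ∧ m = m'
  | [], [], _, _, h, _, _, _, _ => ⟨rfl, h⟩
  | [], b :: _, _, _, h, _, hu', hm, _ => by
    subst h; exact absurd (hu' b (by simp)) (hm b (by simp))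
  | a :: _, [], _, _, h, hu, _, _, hm' => by
    subst h; exact absurd (hu a (by simp)) (hm' a (by simp))
  | a :: u, b :: u', m, m', h, hu, hu', hm, hm' => by
    obtain ⟨rfl, htail⟩ := List.cons_eq_cons.mp h
    obtain ⟨rfl, rfl⟩ := append_inj_of_forall_not_head? htail
      (fun x hx => hu x (mem_cons_of_mem a hx)) (fun x hx => hu' x (mem_cons_of_mem a hx)) hm hm'
    exact ⟨rfl, rfl⟩

theorem mem_of_mem_head?_append {u w : List α} (hu : u ≠ []) {a : α} (ha : a ∈ (u ++ w).head?) :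
    a ∈ u := by
  obtain ⟨b, u, rfl⟩ := exists_cons_of_ne_nil hu
  simp_all

theorem mem_of_mem_getLast?_append {u w : List α} (hw : w ≠ []) {a : α}
    (ha : a ∈ (u ++ w).getLast?) :
    a ∈ w := by
  rw [getLast?_append, getLast?_eq_some_getLast hw] at ha
  exact mem_of_mem_getLast? (by simpa [getLast?_eq_some_getLast hw] using ha)

end List

namespace RunFreeWords

variable {α : Type*} {k n : ℕ} {S I J : Finset α} {u v t w x y u' v' t' : List α}

def NoRun (k : ℕ) (S : Finset α) (w : List α) : Prop :=
  ¬ ∃ v : List α, v.length = k ∧ (∀ a ∈ v, a ∈ S) ∧ v <:+: w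

theorem NoRun.mono (hw : NoRun k S w) (h : v <:+: w) : NoRun k S v :=
  fun ⟨z, hz, hzS, hzv⟩ => hw ⟨z, hz, hzS, hzv.trans h⟩

theorem NoRun.length_lt (hw : NoRun k S w) (h : v <:+: w) (hv : ∀ a ∈ v, a ∈ S) :
    v.length < k := by
  by_contra! hlen
  exact hw ⟨v.take k, List.length_take_of_le hlen, fun a ha => hv a (List.mem_of_mem_take ha),
    (List.take_prefix k v).isInfix.trans h⟩

theorem noRun_of_length_lt (h : w.length < k) : NoRun k S w :=
  fun ⟨_, hv, _, hvw⟩ => absurd hvw.length_le (by omega)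

theorem noRun_of_forall_not_mem (hk : k ≠ 0) (h : ∀ a ∈ w, a ∉ S) : NoRun k S w := by
  rintro ⟨v, hv, hvS, hvw⟩
  obtain ⟨a, ha⟩ := List.exists_mem_of_length_pos (l := v) (by omega)
  exact h a (hvw.subset ha) (hvS a ha)

theorem NoRun.append (hx : NoRun k S x) (hy : NoRun k S y)
    (hseam : ∀ a ∈ x.getLast?, ∀ b ∈ y.head?, a ∈ S → b ∉ S) : NoRun k S (x ++ y) := by
  rintro ⟨v, hv, hvS, hvxy⟩
  rcases List.infix_append_iff_ne_nil.mp hvxy with hvx | hvy | ⟨v₁, v₂, hv₁, hv₂, rfl, hsuf, hpre⟩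
  · exact hx ⟨v, hv, hvS, hvx⟩
  · exact hy ⟨v, hv, hvS, hvy⟩
  · refine hseam _ (List.getLast_mem_getLast? (hsuf.ne_nil hv₁)) _
      (List.head_mem_head? (hpre.ne_nil hv₂)) ?_ ?_
    · rw [← hsuf.getLast hv₁]; exact hvS _ (by simp [List.getLast_mem])
    · rw [← hpre.head hv₂]; exact hvS _ (by simp [List.head_mem])

-- The conditions on `head?` and `getLast?` are vacuous for `[]`, which accounts for `r 0 = 1`.
def Admissible (k : ℕ) (I J : Finset α) (w : List α) : Prop :=
  (∀ a ∈ w.head?, a ∈ I) ∧ (∀ a ∈ w.getLast?, a ∈ J) ∧ NoRun k I w ∧ NoRun k J w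

theorem admissible_nil (hk : k ≠ 0) : Admissible k I J [] :=
  ⟨by simp, by simp, noRun_of_length_lt (by simpa [Nat.pos_iff_ne_zero]),
    noRun_of_length_lt (by simpa [Nat.pos_iff_ne_zero])⟩

theorem admissible_append_iff (hd : Disjoint I J) (hk : k ≠ 0) (hu : u ≠ [])
    (huI : ∀ a ∈ u, a ∈ I) (hv : v ≠ []) (hvJ : ∀ a ∈ v, a ∈ J) (ht : ∀ a ∈ t.head?, a ∈ I) :
    Admissible k I J (u ++ v ++ t) ↔ u.length < k ∧ v.length < k ∧ Admissible k I J t := by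
  have hIJ : ∀ a ∈ I, a ∉ J := fun _ ha => disjoint_left.mp hd ha
  have hJI : ∀ a ∈ J, a ∉ I := fun _ ha => disjoint_right.mp hd ha
  constructor
  · rintro ⟨-, hlast, hI, hJ⟩
    refine ⟨hI.length_lt (by rw [List.append_assoc]; exact List.infix_append_left) huI,
      hJ.length_lt (List.infix_append _ _ _) hvJ, ht, fun a ha => hlast a ?_,
      hI.mono List.infix_append_right, hJ.mono List.infix_append_right⟩
    rw [List.getLast?_append, Option.mem_def.mp ha, Option.some_or]
    rfl
  · rintro ⟨hu', hv', -, htJ, htI, htJ'⟩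
    refine ⟨fun a ha => huI a (List.mem_of_mem_head?_append hu (by rwa [List.append_assoc] at ha)),
      ?_, ?_, ?_⟩
    · intro a ha
      rcases eq_or_ne t [] with rfl | htne
      · exact hvJ a (List.mem_of_mem_getLast?_append hv (by simpa using ha))
      · exact htJ a (by simpa [List.getLast?_append, List.getLast?_eq_some_getLast htne] using ha)
    · have hIv : NoRun k I v := noRun_of_forall_not_mem hk fun a ha => hJI a (hvJ a ha)
      have hIvt : NoRun k I (v ++ t) := hIv.append htI fun a ha _ _ haI =>
        absurd haI (hJI a (hvJ a (List.mem_of_mem_getLast? ha)))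
      rw [List.append_assoc]
      exact (noRun_of_length_lt hu').append hIvt fun _ _ b hb _ =>
        hJI b (hvJ b (List.mem_of_mem_head?_append hv hb))
    · have hJu : NoRun k J u := noRun_of_forall_not_mem hk fun a ha => hIJ a (huI a ha)
      have hJuv : NoRun k J (u ++ v) := hJu.append (noRun_of_length_lt hv') fun a ha _ _ haJ =>
        absurd haJ (hIJ a (huI a (List.mem_of_mem_getLast? ha)))
      exact hJuv.append htJ' fun _ _ b hb _ => hIJ b (ht b hb)

theorem exists_eq_blocks_append (hd : Disjoint I J) (hcov : ∀ a, a ∈ I ∨ a ∈ J) (hw : w ≠ [])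
    (hhead : ∀ a ∈ w.head?, a ∈ I) (hlast : ∀ a ∈ w.getLast?, a ∈ J) :
    ∃ u v t, w = u ++ v ++ t ∧ u ≠ [] ∧ (∀ a ∈ u, a ∈ I) ∧ v ≠ [] ∧ (∀ a ∈ v, a ∈ J) ∧
      ∀ a ∈ t.head?, a ∈ I := by
  obtain ⟨u, m, rfl, huI, hm⟩ := List.exists_eq_append_forall_not_head? (· ∈ I) w
  obtain ⟨v, t, rfl, hvJ, ht⟩ := List.exists_eq_append_forall_not_head? (· ∈ J) m
  refine ⟨u, v, t, (List.append_assoc ..).symm, ?_, huI, ?_, hvJ,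
    fun a ha => (hcov a).resolve_right (ht a ha)⟩
  · rintro rfl
    obtain ⟨a, ha⟩ := Option.ne_none_iff_exists'.mp (mt List.head?_eq_none_iff.mp hw)
    exact hm a ha (hhead a ha)
  · rintro rfl
    rcases eq_or_ne t [] with rfl | htne
    · obtain ⟨a, ha⟩ := Option.ne_none_iff_exists'.mp (mt List.getLast?_eq_none_iff.mp hw)
      exact disjoint_left.mp hd (huI a (by simpa using List.mem_of_mem_getLast? ha)) (hlast a ha)
    · obtain ⟨a, ha⟩ := Option.ne_none_iff_exists'.mp (mt List.head?_eq_none_iff.mp htne)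
      exact (hcov a).elim (hm a ha) (ht a ha)

theorem blocks_append_inj (hd : Disjoint I J) (huI : ∀ a ∈ u, a ∈ I) (hu'I : ∀ a ∈ u', a ∈ I)
    (hv : v ≠ []) (hvJ : ∀ a ∈ v, a ∈ J) (hv' : v' ≠ []) (hv'J : ∀ a ∈ v', a ∈ J)
    (ht : ∀ a ∈ t.head?, a ∈ I) (ht' : ∀ a ∈ t'.head?, a ∈ I)
    (h : u ++ v ++ t = u' ++ v' ++ t') : u = u' ∧ v = v' ∧ t = t' := by
  have hIJ : ∀ a ∈ I, a ∉ J := fun _ ha => disjoint_left.mp hd ha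
  have hJI : ∀ a ∈ J, a ∉ I := fun _ ha => disjoint_right.mp hd ha
  simp only [List.append_assoc] at h
  obtain ⟨rfl, hvt⟩ := List.append_inj_of_forall_not_head? (p := (· ∈ I)) h huI hu'I
    (fun a ha => hJI a (hvJ a (List.mem_of_mem_head?_append hv ha)))
    (fun a ha => hJI a (hv'J a (List.mem_of_mem_head?_append hv' ha)))
  obtain ⟨rfl, rfl⟩ := List.append_inj_of_forall_not_head? (p := (· ∈ J)) hvt hvJ hv'J
    (fun a ha => hIJ a (ht a ha)) (fun a ha => hIJ a (ht' a ha))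
  exact ⟨rfl, rfl, rfl⟩

section Counting

variable [DecidableEq α]

def runs (S : Finset α) (n : ℕ) : Finset (List α) :=
  (Fintype.piFinset fun _ : Fin n => S).image List.ofFn

theorem mem_runs : w ∈ runs S n ↔ w.length = n ∧ ∀ a ∈ w, a ∈ S := by
  constructor
  · intro hw
    obtain ⟨f, hf, rfl⟩ := mem_image.mp hw
    rw [Fintype.mem_piFinset] at hf
    refine ⟨List.length_ofFn, fun a ha => ?_⟩
    obtain ⟨i, rfl⟩ := List.mem_ofFn.mp ha
    exact hf i
  · rintro ⟨rfl, hw⟩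
    exact mem_image.mpr ⟨w.get, Fintype.mem_piFinset.mpr fun i => hw _ (List.get_mem _ _),
      List.ofFn_get w⟩

theorem card_runs : #(runs S n) = #S ^ n := by
  rw [runs, card_image_of_injective _ List.ofFn_injective, Fintype.card_piFinset, prod_const,
    card_univ, Fintype.card_fin]

variable [Fintype α]

open Classical in
noncomputable def admissibleWords (k : ℕ) (I J : Finset α) (n : ℕ) : Finset (List α) :=
  (runs univ n).filter (Admissible k I J)

theorem mem_admissibleWords : w ∈ admissibleWords k I J n ↔ w.length = n ∧ Admissible k I J w := by
  simp [admissibleWords, mem_runs]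

theorem card_admissibleWords_zero (hk : k ≠ 0) : #(admissibleWords k I J 0) = 1 :=
  card_eq_one.mpr ⟨[], ext fun w => by
    simp only [mem_admissibleWords, List.length_eq_zero_iff, mem_singleton]
    exact ⟨And.left, fun h => ⟨h, h ▸ admissible_nil hk⟩⟩⟩

noncomputable def blockTriples (k : ℕ) (I J : Finset α) (n : ℕ) :
    Finset (List α × List α × List α) :=
  ((Ico 1 k ×ˢ Ico 1 k).filter fun p => p.1 + p.2 ≤ n).biUnion fun p =>
    runs I p.1 ×ˢ runs J p.2 ×ˢ admissibleWords k I J (n - (p.1 + p.2))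

theorem card_blockTriples : #(blockTriples k I J n) = ∑ i ∈ Ico 1 k, ∑ j ∈ Ico 1 k,
    if i + j ≤ n then #I ^ i * #J ^ j * #(admissibleWords k I J (n - (i + j))) else 0 := by
  rw [blockTriples, card_biUnion, sum_filter, sum_product]
  · simp only [card_product, card_runs, mul_assoc]
  · rintro ⟨i, j⟩ - ⟨i', j'⟩ - hne
    refine disjoint_left.mpr fun x hx hx' => hne ?_
    simp only [mem_product, mem_runs] at hx hx'
    rw [← hx.1.1, ← hx'.1.1, ← hx.2.1.1, ← hx'.2.1.1]

theorem injOn_blockTriples (hd : Disjoint I J) :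
    Set.InjOn (fun x : List α × List α × List α => x.1 ++ x.2.1 ++ x.2.2)
      (blockTriples k I J n) := by
  rintro ⟨u, v, t⟩ hx ⟨u', v', t'⟩ hx' h
  simp only [blockTriples, coe_biUnion, coe_filter, mem_product, mem_Ico, Set.mem_iUnion,
    mem_coe, mem_runs, mem_admissibleWords, exists_prop, Prod.exists] at hx hx'
  obtain ⟨i, j, ⟨⟨-, hj, -⟩, -⟩, ⟨-, huI⟩, ⟨hvl, hvJ⟩, -, ht, -⟩ := hx
  obtain ⟨i', j', ⟨⟨-, hj', -⟩, -⟩, ⟨-, hu'I⟩, ⟨hv'l, hv'J⟩, -, ht', -⟩ := hx'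
  obtain ⟨rfl, rfl, rfl⟩ := blocks_append_inj hd huI hu'I
    (List.ne_nil_of_length_pos (by omega)) hvJ (List.ne_nil_of_length_pos (by omega)) hv'J ht ht' h
  rfl

theorem admissibleWords_eq_image (hd : Disjoint I J) (hcov : ∀ a, a ∈ I ∨ a ∈ J) (hk : k ≠ 0)
    (hn : n ≠ 0) : admissibleWords k I J n =
      (blockTriples k I J n).image fun x => x.1 ++ x.2.1 ++ x.2.2 := by
  ext w
  simp only [mem_image, blockTriples, mem_biUnion, mem_filter, mem_product, mem_Ico, mem_runs,
    mem_admissibleWords, Prod.exists]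
  constructor
  · rintro ⟨rfl, hw⟩
    obtain ⟨u, v, t, rfl, hu, huI, hv, hvJ, ht⟩ :=
      exists_eq_blocks_append hd hcov (List.ne_nil_of_length_pos (by omega)) hw.1 hw.2.1
    obtain ⟨hu', hv', htadm⟩ := (admissible_append_iff hd hk hu huI hv hvJ ht).mp hw
    refine ⟨u, v, t, ⟨u.length, v.length, ⟨⟨⟨List.length_pos_iff.mpr hu, hu'⟩,
      List.length_pos_iff.mpr hv, hv'⟩, by simp⟩, ⟨rfl, huI⟩, ⟨rfl, hvJ⟩, ?_, htadm⟩, rfl⟩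
    simp only [List.length_append]
    omega
  · rintro ⟨u, v, t, ⟨i, j, ⟨⟨⟨hi, hik⟩, hj, hjk⟩, hij⟩, ⟨rfl, huI⟩, ⟨rfl, hvJ⟩, htn, htadm⟩, rfl⟩
    refine ⟨by simp only [List.length_append]; omega, (admissible_append_iff hd hk (List.ne_nil_of_length_pos hi) huI
      (List.ne_nil_of_length_pos hj) hvJ htadm.1).mpr ⟨hik, hjk, htadm⟩⟩

theorem card_admissibleWords (hd : Disjoint I J) (hcov : ∀ a, a ∈ I ∨ a ∈ J) (hk : k ≠ 0)
    (hn : n ≠ 0) : #(admissibleWords k I J n) = ∑ i ∈ Ico 1 k, ∑ j ∈ Ico 1 k,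
      if i + j ≤ n then #I ^ i * #J ^ j * #(admissibleWords k I J (n - (i + j))) else 0 := by
  rw [admissibleWords_eq_image hd hcov hk hn, card_image_of_injOn (injOn_blockTriples hd),
    card_blockTriples]

theorem natCard_eq_card_admissibleWords (hn : n ≠ 0) (d : α) :
    Nat.card {w : List α // w.length = n ∧ w.getD 0 d ∈ I ∧ w.getD (n - 1) d ∈ J ∧
      NoRun k I w ∧ NoRun k J w} = #(admissibleWords k I J n) := by
  rw [← Nat.card_eq_finsetCard]
  refine Nat.card_congr (Equiv.subtypeEquivRight fun w => ?_)
  rw [mem_admissibleWords]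
  refine and_congr_right fun hw => ?_
  obtain ⟨a, w, rfl⟩ := List.exists_cons_of_ne_nil (List.ne_nil_of_length_pos (l := w) (by omega))
  subst hw
  simp [Admissible, List.getD_eq_getElem?_getD, List.getLast?_eq_getElem?]

end Counting

end RunFreeWords

namespace PowerSeries

variable {R : Type*} [CommRing R] {a b : R} {k : ℕ}

theorem mk_eq_one_add_geom_sum_mul {A : ℕ → R} (h0 : A 0 = 1)
    (hA : ∀ n ≠ 0, A n = ∑ i ∈ Ico 1 k, ∑ j ∈ Ico 1 k,
      if i + j ≤ n then a ^ i * b ^ j * A (n - (i + j)) else 0) :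
    mk A = 1 + (∑ i ∈ Ico 1 k, (C a * X) ^ i) * (∑ j ∈ Ico 1 k, (C b * X) ^ j) * mk A := by
  have hsum : (∑ i ∈ Ico 1 k, (C a * X) ^ i) * (∑ j ∈ Ico 1 k, (C b * X) ^ j) * mk A =
      ∑ i ∈ Ico 1 k, ∑ j ∈ Ico 1 k, C (a ^ i * b ^ j) * (X ^ (i + j) * mk A) := by
    rw [sum_mul_sum, sum_mul]
    refine sum_congr rfl fun i _ => ?_
    rw [sum_mul]
    refine sum_congr rfl fun j _ => ?_
    simp only [map_mul, map_pow]
    ring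
  ext n
  simp only [hsum, map_add, map_sum, coeff_C_mul, coeff_X_pow_mul', coeff_mk, mul_ite, mul_zero]
  rcases eq_or_ne n 0 with rfl | hn
  · rw [h0, coeff_zero_eq_constantCoeff, map_one, left_eq_add]
    exact sum_eq_zero fun i hi => sum_eq_zero fun j _ => if_neg (by grind)
  · rw [hA n hn, coeff_one, if_neg hn, zero_add]

theorem mul_eq_of_eq_one_add_geom_sum_mul (hk : k ≠ 0) {f : R⟦X⟧}
    (h : f = 1 + (∑ i ∈ Ico 1 k, (C a * X) ^ i) * (∑ j ∈ Ico 1 k, (C b * X) ^ j) * f) :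
    (1 - C (a + b) * X + C (a ^ k * b + a * b ^ k) * X ^ (k + 1)
        - C (a ^ k * b ^ k) * X ^ (2 * k)) * f = C (a * b) * X ^ 2 - C (a + b) * X + 1 := by
  have hF := geom_sum_Ico_mul_neg (C a * X) (Nat.one_le_iff_ne_zero.mpr hk)
  have hG := geom_sum_Ico_mul_neg (C b * X) (Nat.one_le_iff_ne_zero.mpr hk)
  simp only [map_add, map_mul, map_pow] at hF hG ⊢
  linear_combination (1 - C a * X) * (1 - C b * X) * h
    + f * (∑ i ∈ Ico 1 k, (C a * X) ^ i) * (1 - C a * X) * hG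
    + f * (C b * X - (C b * X) ^ k) * hF

end PowerSeries

open RunFreeWords

/-- The generating function `∑_{n ≥ 0} r n xⁿ`, where `r n` counts words
of length `n` over `ℤ_q` starting in `I`, ending in `J`, with no `k` consecutive letters
from `I` nor `k` consecutive letters from `J` (and `r 0 = 1`), satisfies
`(1 - qx + (|I|^k|J| + |I||J|^k)x^{k+1} - |I|^k|J|^k x^{2k}) ∑ r n xⁿ = |I||J|x² - qx + 1`
as formal power series. -/
theorem stmt13 (q k : ℕ) (hq : 2 ≤ q) (hk : 2 ≤ k)
    (I J : Finset (Fin q))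
    (hd : Disjoint I J) (hun : I ∪ J = Finset.univ)
    (r : ℕ → ℕ) (h0 : r 0 = 1)
    (hcard : ∀ m : ℕ, 1 ≤ m → r m = Nat.card {w : List (Fin q) //
      w.length = m ∧ w.getD 0 ⟨0, by omega⟩ ∈ I ∧ w.getD (m - 1) ⟨0, by omega⟩ ∈ J ∧
      (¬ ∃ v : List (Fin q), v.length = k ∧ (∀ a ∈ v, a ∈ I) ∧ v <:+: w) ∧
      (¬ ∃ v : List (Fin q), v.length = k ∧ (∀ a ∈ v, a ∈ J) ∧ v <:+: w)}) :
    (1 - C (R := ℤ) (q : ℤ) * X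
        + C (R := ℤ) ((I.card : ℤ) ^ k * J.card + I.card * (J.card : ℤ) ^ k) * X ^ (k + 1)
        - C (R := ℤ) ((I.card : ℤ) ^ k * (J.card : ℤ) ^ k) * X ^ (2 * k)) *
        PowerSeries.mk (fun n => (r n : ℤ)) =
      C (R := ℤ) ((I.card : ℤ) * J.card) * X ^ 2 - C (R := ℤ) (q : ℤ) * X + 1 := by
  have hcov : ∀ a, a ∈ I ∨ a ∈ J := fun a => mem_union.mp (hun ▸ mem_univ a)
  have hq' : (q : ℤ) = #I + #J := by
    rw [← Nat.cast_add, ← card_union_of_disjoint hd, hun, card_univ, Fintype.card_fin]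
  have hr : ∀ n, r n = #(admissibleWords k I J n) := by
    intro n
    rcases eq_or_ne n 0 with rfl | hn
    · rw [h0, card_admissibleWords_zero (by omega)]
    · rw [hcard n (by omega)]
      exact natCard_eq_card_admissibleWords hn _
  rw [hq']
  refine mul_eq_of_eq_one_add_geom_sum_mul (by omega) (mk_eq_one_add_geom_sum_mul (by simp [h0])
    fun n hn => ?_)
  simp only [hr, card_admissibleWords hd hcov (by omega : k ≠ 0) hn]
  push_cast
  rfl
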